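/- Let F and F_0 be Borel probability measures on ℝ^d and let X_1, X_2, … be independent and identically distributed random vectors with law F, with empirical measures μ_n. Then almost surely sup_{x ∈ ℝ^d} |D_{μ_n}(x) − D_{F_0}(x)| → sup_{x ∈ ℝ^d} |D_F(x) − D_{F_0}(x)| as n → ∞; in particular, if the depth functions of F and F_0 differ somewhere, the depth-based Kolmogorov–Smirnov distance between the sample and F_0 converges almost surely to a strictly positive limit. -/

import Mathlib

open MeasureTheory ProbabilityTheory Filter Topology
open scoped ENNReal RealInnerProductSpace

/-- Tukey's half-space depth of `x` with respect to `μ`: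
`D_μ(x) = inf_{u ∈ S^{d-1}} μ{ y : ⟨u, y⟩ ≤ ⟨u, x⟩ }`. -/
noncomputable def halfSpaceDepth {d : ℕ} (μ : Measure (EuclideanSpace ℝ (Fin d)))
    (x : EuclideanSpace ℝ (Fin d)) : ℝ :=
  ⨅ u : Metric.sphere (0 : EuclideanSpace ℝ (Fin d)) 1,
    (μ {y | ⟪(u : EuclideanSpace ℝ (Fin d)), y⟫ ≤ ⟪(u : EuclideanSpace ℝ (Fin d)), x⟫}).toReal


/-- The empirical measure `n⁻¹ ∑_{i=1}^n δ_{pts i}` of `n` points in `ℝ^d`. -/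
noncomputable def empiricalMeasure {d : ℕ} (n : ℕ)
    (pts : Fin n → EuclideanSpace ℝ (Fin d)) : Measure (EuclideanSpace ℝ (Fin d)) :=
  (n : ℝ≥0∞)⁻¹ • ∑ i : Fin n, Measure.dirac (pts i)

/-!
The depth is an infimum of masses of closed half-spaces, so `|D_μ - D_ν| ≤ sup_H |μ H - ν H|`
and it suffices to prove the Glivenko–Cantelli theorem for closed half-spaces; the positivity
claim is immediate. For this, half-spaces admit finite brackets of every width for any finite
measure `ν`. Restrict to a ball carrying most of the mass; by compactness of the unit normals
and of the offsets, it is enough to bracket the half-spaces whose normal and offset are close to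
some `(w, t)`. Such a half-space agrees with `{⟪w, ·⟫ < t}` off a thin slab around the
hyperplane `⟪w, ·⟫ = t`, whose mass off the hyperplane is small, and on the hyperplane itself it
cuts out a half-space of the hyperplane, which is the same problem for the restriction of `ν` to
the hyperplane, in one dimension less. The strong law of large numbers then gives almost sure
convergence on the countably many bracket ends used for all widths `1 / (m + 1)`.
-/

open Module Metric Set

section Bracketing

variable {α : Type*} [MeasurableSpace α]

/-- A finite `ε`-bracketing of `𝒞` in `L¹(ν)`, as in the bracketing numbers `N_[](ε, 𝒞, L¹(ν))`
of empirical process theory. -/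
structure IsBracketing (ν : Measure α) (ε : ℝ) (𝒞 : Set (Set α)) (J : Set (Set α × Set α)) :
    Prop where
  finite : J.Finite
  measurableSet_fst : ∀ p ∈ J, MeasurableSet p.1
  measurableSet_snd : ∀ p ∈ J, MeasurableSet p.2
  measureReal_sdiff_le : ∀ p ∈ J, ν.real (p.2 \ p.1) ≤ ε
  exists_mem_Icc : ∀ C ∈ 𝒞, ∃ p ∈ J, C ∈ Icc p.1 p.2

variable {ν : Measure α} {ε ε' : ℝ} {𝒞 𝒞' : Set (Set α)} {J J' : Set (Set α × Set α)}

theorem IsBracketing.mono (h : IsBracketing ν ε 𝒞 J) (hε : ε ≤ ε') (h𝒞 : 𝒞' ⊆ 𝒞) :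
    IsBracketing ν ε' 𝒞' J where
  finite := h.finite
  measurableSet_fst := h.measurableSet_fst
  measurableSet_snd := h.measurableSet_snd
  measureReal_sdiff_le p hp := (h.measureReal_sdiff_le p hp).trans hε
  exists_mem_Icc C hC := h.exists_mem_Icc C (h𝒞 hC)

theorem isBracketing_singleton {L U : Set α} (hL : MeasurableSet L) (hU : MeasurableSet U)
    (h : ν.real (U \ L) ≤ ε) : IsBracketing ν ε (Icc L U) {(L, U)} where
  finite := finite_singleton _
  measurableSet_fst := by simpa using hL
  measurableSet_snd := by simpa using hU
  measureReal_sdiff_le := by simpa using h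
  exists_mem_Icc C hC := ⟨(L, U), rfl, hC⟩

theorem IsBracketing.union (h : IsBracketing ν ε 𝒞 J) (h' : IsBracketing ν ε 𝒞' J') :
    IsBracketing ν ε (𝒞 ∪ 𝒞') (J ∪ J') where
  finite := h.finite.union h'.finite
  measurableSet_fst p := by
    rintro (hp | hp)
    exacts [h.measurableSet_fst p hp, h'.measurableSet_fst p hp]
  measurableSet_snd p := by
    rintro (hp | hp)
    exacts [h.measurableSet_snd p hp, h'.measurableSet_snd p hp]
  measureReal_sdiff_le p := by
    rintro (hp | hp)
    exacts [h.measureReal_sdiff_le p hp, h'.measureReal_sdiff_le p hp]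
  exists_mem_Icc C := by
    rintro (hC | hC)
    · obtain ⟨p, hp, hCp⟩ := h.exists_mem_Icc C hC
      exact ⟨p, .inl hp, hCp⟩
    · obtain ⟨p, hp, hCp⟩ := h'.exists_mem_Icc C hC
      exact ⟨p, .inr hp, hCp⟩

theorem isBracketing_biUnion {ι : Type*} {s : Set ι} (hs : s.Finite) {𝒞 : ι → Set (Set α)}
    {J : ι → Set (Set α × Set α)} (h : ∀ i ∈ s, IsBracketing ν ε (𝒞 i) (J i)) :
    IsBracketing ν ε (⋃ i ∈ s, 𝒞 i) (⋃ i ∈ s, J i) where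
  finite := hs.biUnion fun i hi => (h i hi).finite
  measurableSet_fst p hp := by
    obtain ⟨i, hi, hp⟩ := mem_iUnion₂.1 hp
    exact (h i hi).measurableSet_fst p hp
  measurableSet_snd p hp := by
    obtain ⟨i, hi, hp⟩ := mem_iUnion₂.1 hp
    exact (h i hi).measurableSet_snd p hp
  measureReal_sdiff_le p hp := by
    obtain ⟨i, hi, hp⟩ := mem_iUnion₂.1 hp
    exact (h i hi).measureReal_sdiff_le p hp
  exists_mem_Icc C hC := by
    obtain ⟨i, hi, hC⟩ := mem_iUnion₂.1 hC
    obtain ⟨p, hp, hCp⟩ := (h i hi).exists_mem_Icc C hC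
    exact ⟨p, mem_biUnion hi hp, hCp⟩

theorem tendstoUniformlyOn_measureReal_of_isBracketing [IsFiniteMeasure ν]
    {μ : ℕ → Measure α} [∀ n, IsFiniteMeasure (μ n)]
    (h : ∀ ε > 0, ∃ J, IsBracketing ν ε 𝒞 J ∧ ∀ p ∈ J,
      Tendsto (fun n => (μ n).real p.1) atTop (𝓝 (ν.real p.1)) ∧
      Tendsto (fun n => (μ n).real p.2) atTop (𝓝 (ν.real p.2))) :
    TendstoUniformlyOn (fun n C => (μ n).real C) ν.real atTop 𝒞 := by
  rw [Metric.tendstoUniformlyOn_iff]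
  intro ε hε
  obtain ⟨J, hJ, hconv⟩ := h (ε / 2) (half_pos hε)
  have hends : ∀ᶠ n in atTop, ∀ p ∈ J,
      |(μ n).real p.1 - ν.real p.1| < ε / 2 ∧ |(μ n).real p.2 - ν.real p.2| < ε / 2 := by
    refine (eventually_all_finite hJ.finite).2 fun p hp => ?_
    have h₁ := Metric.tendsto_atTop.1 (hconv p hp).1 (ε / 2) (half_pos hε)
    have h₂ := Metric.tendsto_atTop.1 (hconv p hp).2 (ε / 2) (half_pos hε)
    filter_upwards [eventually_atTop.2 h₁, eventually_atTop.2 h₂] with n h₁ h₂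
    exact ⟨h₁, h₂⟩
  filter_upwards [hends] with n hn C hC
  obtain ⟨p, hp, hpC₁, hpC₂⟩ := hJ.exists_mem_Icc C hC
  have hwidth : ν.real p.2 - ν.real p.1 ≤ ε / 2 :=
    (le_measureReal_sdiff (μ := ν)).trans (hJ.measureReal_sdiff_le p hp)
  rw [Real.dist_eq, abs_lt]
  constructor <;> linarith [(abs_lt.1 (hn p hp).1).1, (abs_lt.1 (hn p hp).2).2,
    measureReal_mono (μ := μ n) hpC₁, measureReal_mono (μ := μ n) hpC₂,
    measureReal_mono (μ := ν) hpC₁, measureReal_mono (μ := ν) hpC₂]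

end Bracketing

theorem exists_measureReal_compl_closedBall_le {E : Type*} [NormedAddCommGroup E]
    [MeasurableSpace E] [BorelSpace E] [CompleteSpace E] [SecondCountableTopology E]
    (ν : Measure E) [IsFiniteMeasure ν] {ε : ℝ} (hε : 0 < ε) :
    ∃ R, 0 ≤ R ∧ ν.real (closedBall 0 R)ᶜ ≤ ε := by
  have h := tendsto_measure_compl_closedBall_of_isTightMeasureSet
    (isTightMeasureSet_singleton (μ := ν)) 0
  simp only [mem_singleton_iff, iSup_iSup_eq_left] at h
  have h' := (ENNReal.tendsto_toReal ENNReal.zero_ne_top).comp h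
  rw [ENNReal.toReal_zero] at h'
  exact ((h'.eventually (ge_mem_nhds hε)).and (eventually_ge_atTop 0)).exists.imp
    fun R hR => ⟨hR.2, hR.1⟩

theorem exists_measureReal_Icc_diff_singleton_le (ρ : Measure ℝ) [IsFiniteMeasure ρ] (t : ℝ)
    {ε : ℝ} (hε : 0 < ε) : ∃ c > 0, ρ.real (Icc (t - c) (t + c) \ {t}) ≤ ε := by
  have h := (ENNReal.tendsto_toReal (measure_ne_top ρ {t})).comp
    (tendsto_measure_Icc_nhdsWithin_right' ρ t)
  have h' : Tendsto (fun c => ρ.real (Icc (t - c) (t + c) \ {t})) (𝓝[>] 0) (𝓝 0) := by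
    have h₀ := h.sub_const (ρ.real {t})
    rw [← measureReal_def, sub_self] at h₀
    refine h₀.congr' ?_
    filter_upwards [self_mem_nhdsWithin] with c (hc : 0 < c)
    exact (measureReal_sdiff (by simp [hc.le]) (measurableSet_singleton t)).symm
  exact ((h'.eventually (ge_mem_nhds hε)).and self_mem_nhdsWithin).exists.imp
    fun c hc => ⟨hc.2, hc.1⟩

section HalfSpaceTraces

variable {E : Type*} [NormedAddCommGroup E] [InnerProductSpace ℝ E]

def halfSpaceTrace (A : AffineSubspace ℝ E) (p : E × ℝ) : Set E :=
  A ∩ {y | ⟪p.1, y⟫ ≤ p.2}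

def halfSpacesIn (A : AffineSubspace ℝ E) : Set (Set E) :=
  range (halfSpaceTrace A)

def hyperplane (w : E) (t : ℝ) : AffineSubspace ℝ E where
  carrier := {y | ⟪w, y⟫ = t}
  smul_vsub_vadd_mem' c p₁ p₂ p₃ h₁ h₂ h₃ := by
    simp_all [inner_add_right, inner_sub_right, real_inner_smul_right]

@[simp]
theorem coe_hyperplane (w : E) (t : ℝ) : (hyperplane w t : Set E) = {y | ⟪w, y⟫ = t} :=
  rfl

variable [FiniteDimensional ℝ E]

theorem finrank_direction_inf_hyperplane_lt {A : AffineSubspace ℝ E} {w : E}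
    (hw : w ∈ A.direction) (hw₀ : w ≠ 0) (t : ℝ) :
    finrank ℝ (A ⊓ hyperplane w t).direction < finrank ℝ A.direction := by
  have hker : (hyperplane w t).direction ≤ LinearMap.ker (innerₛₗ ℝ w) := by
    rw [AffineSubspace.direction_eq_vectorSpan, vectorSpan_def, Submodule.span_le]
    rintro _ ⟨y, hy, z, hz, rfl⟩
    simp_all [inner_sub_right]
  have hlt : A.direction ⊓ (hyperplane w t).direction < A.direction :=
    inf_le_left.lt_of_ne fun h => hw₀ (inner_self_eq_zero.1 (hker (h ▸ hw).2))
  calc finrank ℝ (A ⊓ hyperplane w t).direction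
      ≤ finrank ℝ ↥(A.direction ⊓ (hyperplane w t).direction) :=
        Submodule.finrank_mono (AffineSubspace.direction_inf _ _)
    _ < finrank ℝ A.direction := Submodule.finrank_lt_finrank_of_lt hlt

/-- On `A`, only the component of the normal along `A.direction` matters. -/
theorem eq_empty_or_eq_or_exists_unit_of_mem_halfSpacesIn {A : AffineSubspace ℝ E} {C : Set E}
    (hC : C ∈ halfSpacesIn A) :
    C = ∅ ∨ C = A ∨ ∃ u ∈ A.direction, ‖u‖ = 1 ∧ ∃ s, C = halfSpaceTrace A (u, s) := by
  obtain ⟨⟨w, s⟩, rfl⟩ := hC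
  rcases (A : Set E).eq_empty_or_nonempty with hA | ⟨a, ha⟩
  · simp [halfSpaceTrace, hA]
  set w' := A.direction.starProjection w
  have htrace : ∀ y ∈ A, ⟪w, y⟫ = ⟪w', y⟫ + ⟪w - w', a⟫ := by
    intro y hy
    have h := A.direction.starProjection_inner_eq_zero w (y - a)
      (by simpa using A.vsub_mem_direction hy ha)
    rw [inner_sub_right, inner_sub_left, inner_sub_left] at h
    rw [inner_sub_left]
    linarith
  by_cases hw' : w' = 0
  · by_cases has : ⟪w, a⟫ ≤ s
    · refine .inr (.inl (inter_eq_left.2 fun y hy => ?_))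
      simpa [htrace y hy, hw'] using has
    · refine .inl (eq_empty_of_forall_notMem fun y ⟨hy, hys⟩ => has ?_)
      simpa [htrace y hy, hw'] using hys
  · have hpos : 0 < ‖w'‖ := norm_pos_iff.2 hw'
    refine .inr (.inr ⟨‖w'‖⁻¹ • w', A.direction.smul_mem _ (A.direction.starProjection_apply_mem w),
      norm_smul_inv_norm hw', (s - ⟪w - w', a⟫) / ‖w'‖, ?_⟩)
    ext y
    simp only [halfSpaceTrace, mem_inter_iff, mem_ofPred_eq, and_congr_right_iff]
    intro hy
    rw [htrace y hy, real_inner_smul_left, inv_mul_eq_div, div_le_div_iff_of_pos_right hpos]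
    constructor <;> intro h <;> linarith

theorem halfSpacesIn_subset {A : AffineSubspace ℝ E} {R : ℝ} {U : Set (E × ℝ)}
    (hU : (A.direction ∩ sphere 0 1 : Set E) ×ˢ Icc (-R) R ⊆ U) :
    halfSpacesIn A ⊆ halfSpaceTrace A '' U ∪
      (Icc ∅ (A \ closedBall 0 R) ∪ Icc (A ∩ closedBall 0 R) A) := by
  intro C hC
  have hinner : ∀ u : E, ‖u‖ = 1 → ∀ y ∈ closedBall (0 : E) R, |⟪u, y⟫| ≤ R := fun u hu y hy =>
    (abs_real_inner_le_norm u y).trans (by simpa [hu] using hy)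
  rcases eq_empty_or_eq_or_exists_unit_of_mem_halfSpacesIn hC with rfl | rfl | ⟨u, hu, hu₁, s, rfl⟩
  · exact .inr (.inl ⟨empty_subset _, empty_subset _⟩)
  · exact .inr (.inr ⟨inter_subset_left, subset_rfl⟩)
  rcases lt_or_ge s (-R) with hs | hs
  · refine .inr (.inl ⟨empty_subset _, fun y ⟨hyA, hys⟩ => ⟨hyA, fun hyR => ?_⟩⟩)
    linarith [(abs_le.1 (hinner u hu₁ y hyR)).1, show ⟪u, y⟫ ≤ s from hys]
  rcases le_or_gt R s with hs' | hs'
  · refine .inr (.inr ⟨fun y ⟨hyA, hyR⟩ => ⟨hyA, ?_⟩, inter_subset_left⟩)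
    exact (abs_le.1 (hinner u hu₁ y hyR)).2.trans hs'
  · exact .inl ⟨(u, s), hU ⟨⟨hu, by simpa using hu₁⟩, hs, hs'.le⟩, rfl⟩

end HalfSpaceTraces

section Slabs

variable {E : Type*} [NormedAddCommGroup E] [InnerProductSpace ℝ E]

/-- A bracket `q` of a trace on the slice `A ∩ {⟪w₀, ·⟫ = t}`, widened to a bracket on `A` of the
traces of all half-spaces with nearby normal and offset: off the slice, only the slab
`t - c < ⟪w₀, ·⟫ ≤ t + c` and the exterior of the ball of radius `R` are left undecided. -/
def slabBracket (A : AffineSubspace ℝ E) (w₀ : E) (t c R : ℝ) (q : Set E × Set E) :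
    Set E × Set E :=
  ((A ∩ closedBall 0 R ∩ {y | ⟪w₀, y⟫ ≤ t - c}) ∪ q.1,
    A ∩ ((closedBall 0 R)ᶜ ∪ {y | ⟪w₀, y⟫ ≤ t + c ∧ ⟪w₀, y⟫ ≠ t} ∪ (q.2 ∩ {y | ⟪w₀, y⟫ = t})))

variable {A : AffineSubspace ℝ E} {w₀ : E} {t c R : ℝ} {q : Set E × Set E}

theorem halfSpaceTrace_mem_Icc_slabBracket {w : E} {s : ℝ} (hws : ‖w - w₀‖ * R + |s - t| ≤ c)
    (hq : halfSpaceTrace (A ⊓ hyperplane w₀ t) (w, s) ∈ Icc q.1 q.2) :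
    halfSpaceTrace A (w, s) ∈ Icc (slabBracket A w₀ t c R q).1 (slabBracket A w₀ t c R q).2 := by
  have hclose : ∀ y ∈ closedBall (0 : E) R, |⟪w, y⟫ - ⟪w₀, y⟫| ≤ ‖w - w₀‖ * R := fun y hy => by
    rw [← inner_sub_left]
    exact (abs_real_inner_le_norm _ _).trans
      (mul_le_mul_of_nonneg_left (by simpa using hy) (norm_nonneg _))
  have hst₁ := le_abs_self (s - t)
  have hst₂ := neg_abs_le (s - t)
  simp only [halfSpaceTrace] at hq ⊢
  obtain ⟨hq₁, hq₂⟩ := hq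
  constructor
  · rintro y (⟨⟨hyA, hyR⟩, hyt⟩ | hyq)
    · have := abs_le.1 (hclose y hyR)
      exact ⟨hyA, show ⟪w, y⟫ ≤ s by simp only [mem_ofPred_eq] at hyt; linarith⟩
    · exact ⟨(hq₁ hyq).1.1, (hq₁ hyq).2⟩
  · rintro y ⟨hyA, hys⟩
    refine ⟨hyA, ?_⟩
    by_cases hyR : y ∈ closedBall 0 R
    · by_cases hyt : ⟪w₀, y⟫ = t
      · exact .inr ⟨hq₂ ⟨⟨hyA, hyt⟩, hys⟩, hyt⟩
      · have := abs_le.1 (hclose y hyR)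
        exact .inl (.inr ⟨by simp only [mem_ofPred_eq] at hys; linarith, hyt⟩)
    · exact .inl (.inl hyR)

variable [FiniteDimensional ℝ E] [MeasurableSpace E] [BorelSpace E]

theorem measurableSet_slabBracket_fst (hq : MeasurableSet q.1) :
    MeasurableSet (slabBracket A w₀ t c R q).1 :=
  ((A.closed_of_finiteDimensional.measurableSet.inter measurableSet_closedBall).inter
    (measurableSet_le (by fun_prop) measurable_const)).union hq

theorem measurableSet_slabBracket_snd (hq : MeasurableSet q.2) :
    MeasurableSet (slabBracket A w₀ t c R q).2 := by
  have hinner : Measurable fun y : E => ⟪w₀, y⟫ := by fun_prop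
  exact A.closed_of_finiteDimensional.measurableSet.inter
    ((measurableSet_closedBall.compl.union ((measurableSet_le hinner measurable_const).inter
      (measurableSet_eq_fun hinner measurable_const).compl)).union
      (hq.inter (measurableSet_eq_fun hinner measurable_const)))

theorem measureReal_slabBracket_sdiff_le (ν : Measure E) [IsFiniteMeasure ν] :
    ν.real ((slabBracket A w₀ t c R q).2 \ (slabBracket A w₀ t c R q).1) ≤
      (ν.map (⟪w₀, ·⟫)).real (Icc (t - c) (t + c) \ {t}) +
        (ν.restrict (hyperplane w₀ t)).real (q.2 \ q.1) + ν.real (closedBall 0 R)ᶜ := by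
  rw [map_measureReal_apply (by fun_prop) (measurableSet_Icc.diff (measurableSet_singleton t)),
    measureReal_restrict_apply' (hyperplane w₀ t).closed_of_finiteDimensional.measurableSet]
  refine (measureReal_mono ?_).trans
    ((measureReal_union_le _ _).trans (add_le_add_left (measureReal_union_le _ _) _))
  rintro y ⟨⟨hyA, (hyR | ⟨hyc, hyt⟩) | ⟨hyq, hyt⟩⟩, hyL⟩
  · exact .inr hyR
  · by_cases hyR : y ∈ closedBall 0 R
    · have hlow : t - c ≤ ⟪w₀, y⟫ := by
        by_contra h
        exact hyL (.inl ⟨⟨hyA, hyR⟩, (not_le.1 h).le⟩)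
      exact .inl (.inl ⟨⟨hlow, hyc⟩, hyt⟩)
    · exact .inr hyR
  · exact .inl (.inr ⟨⟨hyq, fun h => hyL (.inr h)⟩, hyt⟩)

theorem exists_isBracketing_image_ball {ν : Measure E} [IsFiniteMeasure ν] {ε : ℝ} (hε : 0 < ε)
    (hR : 0 ≤ R) (hball : ν.real (closedBall 0 R)ᶜ ≤ ε) {J : Set (Set E × Set E)}
    (hJ : IsBracketing (ν.restrict (hyperplane w₀ t)) ε (halfSpacesIn (A ⊓ hyperplane w₀ t)) J) :
    ∃ δ > 0, ∃ J', IsBracketing ν (3 * ε) (halfSpaceTrace A '' ball (w₀, t) δ) J' := by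
  obtain ⟨c, hc, hcν⟩ := exists_measureReal_Icc_diff_singleton_le (ν.map (⟪w₀, ·⟫)) t hε
  refine ⟨c / (R + 1), by positivity, slabBracket A w₀ t c R '' J,
    ⟨hJ.finite.image _, ?_, ?_, ?_, ?_⟩⟩
  · rintro _ ⟨q, hq, rfl⟩
    exact measurableSet_slabBracket_fst (hJ.measurableSet_fst q hq)
  · rintro _ ⟨q, hq, rfl⟩
    exact measurableSet_slabBracket_snd (hJ.measurableSet_snd q hq)
  · rintro _ ⟨q, hq, rfl⟩
    refine (measureReal_slabBracket_sdiff_le ν).trans ?_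
    linarith [hJ.measureReal_sdiff_le q hq]
  · rintro _ ⟨⟨w, s⟩, hws, rfl⟩
    obtain ⟨q, hq, hCq⟩ := hJ.exists_mem_Icc _ ⟨(w, s), rfl⟩
    refine ⟨_, mem_image_of_mem _ hq, halfSpaceTrace_mem_Icc_slabBracket ?_ hCq⟩
    rw [mem_ball, Prod.dist_eq, max_lt_iff, dist_eq_norm, Real.dist_eq] at hws
    calc ‖w - w₀‖ * R + |s - t| ≤ c / (R + 1) * R + c / (R + 1) := by
          gcongr
          exacts [hws.1.le, hws.2.le]
      _ = c := by field_simp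

end Slabs

section Induction

variable {E : Type*} [NormedAddCommGroup E] [InnerProductSpace ℝ E] [FiniteDimensional ℝ E]
  [MeasurableSpace E] [BorelSpace E]

theorem exists_isBracketing_halfSpacesIn_of_slices {ν : Measure E} [IsFiniteMeasure ν]
    {A : AffineSubspace ℝ E} {ε : ℝ} (hε : 0 < ε)
    (hslice : ∀ w ∈ A.direction, ‖w‖ = 1 → ∀ t, ∃ J, IsBracketing (ν.restrict (hyperplane w t))
      (ε / 3) (halfSpacesIn (A ⊓ hyperplane w t)) J) :
    ∃ J, IsBracketing ν ε (halfSpacesIn A) J := by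
  obtain ⟨R, hR, hball⟩ := exists_measureReal_compl_closedBall_le ν (by positivity : 0 < ε / 3)
  set K : Set (E × ℝ) := (A.direction ∩ sphere 0 1 : Set E) ×ˢ Icc (-R) R
  have hK : IsCompact K :=
    ((isCompact_sphere 0 1).inter_left A.direction.closed_of_finiteDimensional).prod isCompact_Icc
  have hlocal : ∀ p ∈ K, ∃ δ > 0, ∃ J, IsBracketing ν ε (halfSpaceTrace A '' ball p δ) J := by
    rintro ⟨w, t⟩ ⟨⟨hw, hw₁⟩, -⟩
    obtain ⟨J, hJ⟩ := hslice w hw (by simpa using hw₁) t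
    obtain ⟨δ, hδ, J', hJ'⟩ := exists_isBracketing_image_ball (by positivity) hR hball hJ
    exact ⟨δ, hδ, J', hJ'.mono (by linarith) subset_rfl⟩
  choose! δ hδ J hJ using hlocal
  obtain ⟨T, hTK, hKT⟩ :=
    hK.elim_nhds_subcover (fun p => ball p (δ p)) fun p hp => ball_mem_nhds p (hδ p hp)
  have hA : MeasurableSet (A : Set E) := A.closed_of_finiteDimensional.measurableSet
  have hwidth : ∀ L U : Set E, U \ L ⊆ (closedBall 0 R)ᶜ → ν.real (U \ L) ≤ ε := fun L U h =>
    (measureReal_mono h).trans (by linarith)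
  have htails := (isBracketing_singleton MeasurableSet.empty (hA.diff measurableSet_closedBall)
    (hwidth _ _ fun y hy => hy.1.2)).union (isBracketing_singleton
      (hA.inter measurableSet_closedBall) hA (hwidth _ _ fun y hy => fun hyR => hy.2 ⟨hy.1, hyR⟩))
  refine ⟨_, ((isBracketing_biUnion T.finite_toSet fun p hp => hJ p (hTK p hp)).union
    htails).mono le_rfl ?_⟩
  rw [← image_iUnion₂]
  exact halfSpacesIn_subset hKT

theorem exists_isBracketing_halfSpacesIn (A : AffineSubspace ℝ E) (ν : Measure E)
    [IsFiniteMeasure ν] {ε : ℝ} (hε : 0 < ε) : ∃ J, IsBracketing ν ε (halfSpacesIn A) J := by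
  induction hk : finrank ℝ A.direction using Nat.strong_induction_on generalizing A ν ε with
  | _ k ih =>
    refine exists_isBracketing_halfSpacesIn_of_slices hε fun w hw hw₁ t => ?_
    have hw₀ : w ≠ 0 := norm_ne_zero_iff.1 (by simp [hw₁])
    exact ih _ (hk ▸ finrank_direction_inf_hyperplane_lt hw hw₀ t) _ _ (by positivity) rfl

end Induction

section Empirical

variable {d : ℕ}

theorem measureReal_empiricalMeasure (n : ℕ) (x : ℕ → EuclideanSpace ℝ (Fin d))
    {B : Set (EuclideanSpace ℝ (Fin d))} (hB : MeasurableSet B) :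
    (empiricalMeasure n fun i : Fin n => x i).real B
      = (∑ i ∈ Finset.range n, B.indicator 1 (x i)) / n := by
  have hsum : (∑ i : Fin n, Measure.dirac (x i)) B = ∑ i : Fin n, B.indicator 1 (x i) := by
    simp [Measure.finsetSum_apply, Measure.dirac_apply' _ hB]
  rw [empiricalMeasure, measureReal_ennreal_smul_apply, measureReal_def, hsum,
    ENNReal.toReal_sum (fun i _ => by by_cases hi : x i ∈ B <;> simp [hi]),
    Finset.sum_range (fun i => B.indicator 1 (x i))]
  simp only [ENNReal.toReal_inv, ENNReal.toReal_natCast, div_eq_inv_mul]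
  congr 1
  refine Finset.sum_congr rfl fun i _ => ?_
  by_cases hi : x i ∈ B <;> simp [hi]

instance (n : ℕ) (pts : Fin n → EuclideanSpace ℝ (Fin d)) :
    IsFiniteMeasure (empiricalMeasure n pts) := by
  rcases n.eq_zero_or_pos with rfl | hn
  · simp only [empiricalMeasure, Finset.univ_eq_empty, Finset.sum_empty, smul_zero]
    infer_instance
  · exact Measure.smul_finite _ (by simpa using hn.ne')

variable {Ω : Type*} [MeasurableSpace Ω] {P : Measure Ω} {F : Measure (EuclideanSpace ℝ (Fin d))}
  [IsFiniteMeasure F] {X : ℕ → Ω → EuclideanSpace ℝ (Fin d)}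

theorem ae_tendsto_measureReal_empiricalMeasure (hmeas : ∀ i, Measurable (X i))
    (hindep : iIndepFun X P) (hid : ∀ i, P.map (X i) = F)
    {B : Set (EuclideanSpace ℝ (Fin d))} (hB : MeasurableSet B) :
    ∀ᵐ ω ∂P, Tendsto (fun n => (empiricalMeasure n fun i : Fin n => X i ω).real B) atTop
      (𝓝 (F.real B)) := by
  have hind : Measurable (B.indicator (1 : EuclideanSpace ℝ (Fin d) → ℝ)) :=
    measurable_const.indicator hB
  have hmean : P[fun ω => B.indicator 1 (X 0 ω)] = F.real B := by
    rw [← integral_map (hmeas 0).aemeasurable hind.aestronglyMeasurable, hid 0,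
      integral_indicator_one hB]
  have hslln := strong_law_ae_real
    (fun i ω => B.indicator (1 : EuclideanSpace ℝ (Fin d) → ℝ) (X i ω))
    ((integrable_map_measure hind.aestronglyMeasurable (hmeas 0).aemeasurable).1
      (by rw [hid 0]; exact (integrable_const 1).indicator hB))
    (fun i j hij => (hindep.indepFun hij).comp hind hind)
    (fun i => (IdentDistrib.mk (hmeas i).aemeasurable (hmeas 0).aemeasurable
      (by rw [hid i, hid 0])).comp hind)
  rw [hmean] at hslln
  filter_upwards [hslln] with ω hω
  exact hω.congr fun n => (measureReal_empiricalMeasure n (X · ω) hB).symm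

theorem ae_tendstoUniformlyOn_empiricalMeasure (hmeas : ∀ i, Measurable (X i))
    (hindep : iIndepFun X P) (hid : ∀ i, P.map (X i) = F) {𝒞 : Set (Set (EuclideanSpace ℝ (Fin d)))}
    (h𝒞 : ∀ ε > 0, ∃ J, IsBracketing F ε 𝒞 J) :
    ∀ᵐ ω ∂P, TendstoUniformlyOn (fun n C => (empiricalMeasure n fun i : Fin n => X i ω).real C)
      F.real atTop 𝒞 := by
  choose J hJ using fun m : ℕ => h𝒞 (1 / (m + 1)) (by positivity)
  have hends : ∀ᵐ ω ∂P, ∀ m, ∀ p ∈ J m,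
      Tendsto (fun n => (empiricalMeasure n fun i : Fin n => X i ω).real p.1) atTop
        (𝓝 (F.real p.1)) ∧
      Tendsto (fun n => (empiricalMeasure n fun i : Fin n => X i ω).real p.2) atTop
        (𝓝 (F.real p.2)) := by
    refine ae_all_iff.2 fun m => (ae_ball_iff (hJ m).finite.countable).2 fun p hp => ?_
    exact (ae_tendsto_measureReal_empiricalMeasure hmeas hindep hid
      ((hJ m).measurableSet_fst p hp)).and
      (ae_tendsto_measureReal_empiricalMeasure hmeas hindep hid ((hJ m).measurableSet_snd p hp))
  filter_upwards [hends] with ω hω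
  refine tendstoUniformlyOn_measureReal_of_isBracketing fun ε hε => ?_
  obtain ⟨m, hm⟩ := exists_nat_one_div_lt hε
  exact ⟨J m, (hJ m).mono hm.le subset_rfl, hω m⟩

end Empirical

section Suprema

variable {ι κ : Type*} {ε : ℝ}

theorem abs_ciSup_sub_ciSup_le [Nonempty ι] {f g : ι → ℝ} (hf : BddAbove (range f))
    (hg : BddAbove (range g)) (h : ∀ i, |f i - g i| ≤ ε) : |(⨆ i, f i) - ⨆ i, g i| ≤ ε := by
  rw [abs_sub_le_iff]
  constructor
  · linarith [ciSup_le fun i => show f i ≤ (⨆ i, g i) + ε by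
      linarith [le_ciSup hg i, (abs_le.1 (h i)).2]]
  · linarith [ciSup_le fun i => show g i ≤ (⨆ i, f i) + ε by
      linarith [le_ciSup hf i, (abs_le.1 (h i)).1]]

theorem abs_ciInf_sub_ciInf_le {f g : ι → ℝ} (hf : BddBelow (range f)) (hg : BddBelow (range g))
    (hε : 0 ≤ ε) (h : ∀ i, |f i - g i| ≤ ε) : |(⨅ i, f i) - ⨅ i, g i| ≤ ε := by
  rcases isEmpty_or_nonempty ι with hι | hι
  · simpa [Real.iInf_of_isEmpty] using hε
  rw [abs_sub_le_iff]
  constructor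
  · linarith [le_ciInf fun i => show (⨅ i, f i) - ε ≤ g i by
      linarith [ciInf_le hf i, (abs_le.1 (h i)).2]]
  · linarith [le_ciInf fun i => show (⨅ i, g i) - ε ≤ f i by
      linarith [ciInf_le hg i, (abs_le.1 (h i)).1]]

theorem TendstoUniformly.abs_sub_right {p : Filter κ} {F : κ → ι → ℝ} {f : ι → ℝ} (g : ι → ℝ)
    (h : TendstoUniformly F f p) :
    TendstoUniformly (fun n x => |F n x - g x|) (fun x => |f x - g x|) p := by
  rw [Metric.tendstoUniformly_iff] at h ⊢
  intro ε hε
  filter_upwards [h ε hε] with n hn x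
  have hx := hn x
  rw [Real.dist_eq] at hx ⊢
  exact (abs_abs_sub_abs_le_abs_sub _ _).trans_lt (by rwa [sub_sub_sub_cancel_right])

theorem TendstoUniformly.tendsto_ciSup [Nonempty ι] {p : Filter κ} {F : κ → ι → ℝ} {f : ι → ℝ}
    (h : TendstoUniformly F f p) (hF : ∀ n, BddAbove (range (F n))) (hf : BddAbove (range f)) :
    Tendsto (fun n => ⨆ i, F n i) p (𝓝 (⨆ i, f i)) := by
  rw [Metric.tendsto_nhds]
  intro ε hε
  filter_upwards [Metric.tendstoUniformly_iff.1 h (ε / 2) (half_pos hε)] with n hn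
  rw [Real.dist_eq]
  refine (abs_ciSup_sub_ciSup_le (hF n) hf fun i => ?_).trans_lt (half_lt_self hε)
  rw [abs_sub_comm, ← Real.dist_eq]
  exact (hn i).le

end Suprema

section Depth

variable {d : ℕ}

theorem halfSpaceDepth_nonneg (μ : Measure (EuclideanSpace ℝ (Fin d)))
    (x : EuclideanSpace ℝ (Fin d)) : 0 ≤ halfSpaceDepth μ x :=
  Real.iInf_nonneg fun _ => ENNReal.toReal_nonneg

theorem halfSpaceDepth_le_measureReal_univ (μ : Measure (EuclideanSpace ℝ (Fin d)))
    [IsFiniteMeasure μ] (x : EuclideanSpace ℝ (Fin d)) : halfSpaceDepth μ x ≤ μ.real univ := by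
  rw [halfSpaceDepth]
  rcases isEmpty_or_nonempty (sphere (0 : EuclideanSpace ℝ (Fin d)) 1) with h | ⟨⟨u⟩⟩
  · rw [Real.iInf_of_isEmpty]
    exact measureReal_nonneg
  · exact (ciInf_le ⟨0, by rintro _ ⟨v, rfl⟩; exact ENNReal.toReal_nonneg⟩ u).trans
      (measureReal_mono (subset_univ _))

theorem bddAbove_range_abs_halfSpaceDepth_sub (μ ν : Measure (EuclideanSpace ℝ (Fin d)))
    [IsFiniteMeasure μ] [IsFiniteMeasure ν] :
    BddAbove (range fun x => |halfSpaceDepth μ x - halfSpaceDepth ν x|) := by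
  refine ⟨μ.real univ + ν.real univ, ?_⟩
  rintro _ ⟨x, rfl⟩
  have := halfSpaceDepth_nonneg μ x
  have := halfSpaceDepth_nonneg ν x
  have := halfSpaceDepth_le_measureReal_univ μ x
  have := halfSpaceDepth_le_measureReal_univ ν x
  rw [abs_le]
  constructor <;> linarith

theorem abs_halfSpaceDepth_sub_le {μ ν : Measure (EuclideanSpace ℝ (Fin d))} {ε : ℝ} (hε : 0 ≤ ε)
    (h : ∀ C ∈ halfSpacesIn (⊤ : AffineSubspace ℝ (EuclideanSpace ℝ (Fin d))),
      |μ.real C - ν.real C| ≤ ε)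
    (x : EuclideanSpace ℝ (Fin d)) : |halfSpaceDepth μ x - halfSpaceDepth ν x| ≤ ε :=
  abs_ciInf_sub_ciInf_le ⟨0, by rintro _ ⟨u, rfl⟩; exact ENNReal.toReal_nonneg⟩
    ⟨0, by rintro _ ⟨u, rfl⟩; exact ENNReal.toReal_nonneg⟩ hε
    fun u => h _ ⟨((u : EuclideanSpace ℝ (Fin d)), ⟪(u : EuclideanSpace ℝ (Fin d)), x⟫),
      by simp [halfSpaceTrace]⟩

theorem tendstoUniformly_halfSpaceDepth {μ : ℕ → Measure (EuclideanSpace ℝ (Fin d))}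
    {ν : Measure (EuclideanSpace ℝ (Fin d))}
    (h : TendstoUniformlyOn (fun n C => (μ n).real C) ν.real atTop
      (halfSpacesIn (⊤ : AffineSubspace ℝ (EuclideanSpace ℝ (Fin d))))) :
    TendstoUniformly (fun n => halfSpaceDepth (μ n)) (halfSpaceDepth ν) atTop := by
  rw [Metric.tendstoUniformly_iff]
  intro ε hε
  filter_upwards [Metric.tendstoUniformlyOn_iff.1 h (ε / 2) (half_pos hε)] with n hn x
  rw [Real.dist_eq]
  exact (abs_halfSpaceDepth_sub_le (half_pos hε).le (fun C hC => (hn C hC).le) x).trans_lt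
    (half_lt_self hε)

end Depth

theorem stmt_19_general {d : ℕ} {Ω : Type*} [MeasurableSpace Ω]
    (P : Measure Ω)
    (F F₀ : Measure (EuclideanSpace ℝ (Fin d)))
    [IsProbabilityMeasure F] [IsProbabilityMeasure F₀]
    (X : ℕ → Ω → EuclideanSpace ℝ (Fin d))
    (hmeas : ∀ i, Measurable (X i))
    (hindep : iIndepFun X P)
    (hid : ∀ i, Measure.map (X i) P = F) :
    (∀ᵐ ω ∂P, Tendsto (fun n =>
        ⨆ x : EuclideanSpace ℝ (Fin d),
          |halfSpaceDepth (empiricalMeasure n (fun i => X i ω)) x - halfSpaceDepth F₀ x|)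
      atTop (𝓝 (⨆ x : EuclideanSpace ℝ (Fin d),
        |halfSpaceDepth F x - halfSpaceDepth F₀ x|))) ∧
    ((∃ x, halfSpaceDepth F x ≠ halfSpaceDepth F₀ x) →
      0 < ⨆ x : EuclideanSpace ℝ (Fin d),
        |halfSpaceDepth F x - halfSpaceDepth F₀ x|) := by
  refine ⟨?_, fun ⟨x, hx⟩ => (abs_pos.2 (sub_ne_zero.2 hx)).trans_le
    (le_ciSup (bddAbove_range_abs_halfSpaceDepth_sub F F₀) x)⟩
  filter_upwards [ae_tendstoUniformlyOn_empiricalMeasure hmeas hindep hid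
    fun ε hε => exists_isBracketing_halfSpacesIn ⊤ F hε] with ω hω
  exact ((tendstoUniformly_halfSpaceDepth hω).abs_sub_right _).tendsto_ciSup
    (fun n => bddAbove_range_abs_halfSpaceDepth_sub _ F₀)
    (bddAbove_range_abs_halfSpaceDepth_sub F F₀)

/-- For i.i.d. samples from `F`, the depth-based Kolmogorov–Smirnov distance to `F₀`
converges almost surely: `sup_x |D_{μₙ}(x) − D_{F₀}(x)| → sup_x |D_F(x) − D_{F₀}(x)|`;
in particular, if the depth functions of `F` and `F₀` differ somewhere, the limit is
strictly positive. -/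
theorem stmt_19 {d : ℕ} {Ω : Type*} [MeasurableSpace Ω]
    (P : Measure Ω) [IsProbabilityMeasure P]
    (F F₀ : Measure (EuclideanSpace ℝ (Fin d)))
    [IsProbabilityMeasure F] [IsProbabilityMeasure F₀]
    (X : ℕ → Ω → EuclideanSpace ℝ (Fin d))
    (hmeas : ∀ i, Measurable (X i))
    (hindep : iIndepFun X P)
    (hid : ∀ i, Measure.map (X i) P = F) :
    (∀ᵐ ω ∂P, Tendsto (fun n =>
        ⨆ x : EuclideanSpace ℝ (Fin d),
          |halfSpaceDepth (empiricalMeasure n (fun i => X i ω)) x - halfSpaceDepth F₀ x|)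
      atTop (𝓝 (⨆ x : EuclideanSpace ℝ (Fin d),
        |halfSpaceDepth F x - halfSpaceDepth F₀ x|))) ∧
    ((∃ x, halfSpaceDepth F x ≠ halfSpaceDepth F₀ x) →
      0 < ⨆ x : EuclideanSpace ℝ (Fin d),
        |halfSpaceDepth F x - halfSpaceDepth F₀ x|) :=
  stmt_19_general P F F₀ X hmeas hindep hid
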